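/- Let (X,d,μ) be an η-Ahlfors regular quasi-metric measure space with η > 0, triangular constant κ ≥ 1 and Ahlfors constants 0 < a ≤ A < ∞, and let ρ be the third order hypermetric induced by d. Let φ : (0,∞) → [0,∞) be nonincreasing and set λ = (1 + A²(2κ)^{2η})^{1/(2η)} / a^{1/η}. Then for every x ∈ X, ∬_{X×X} φ(ρ(x,y,z)) dμ(y) dμ(z) ≥ (1 / (λ^{4η} log λ)) · ∫₀^∞ φ(t) t^{2η−1} dt. -/

import Mathlib

/-!
Cut `X × X` into the annuli `l ^ k ≤ M < l ^ (k + 1)` of `M(y, z) = max (d x y) (d x z)`.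
The quasi-triangle inequality gives `M / (2κ) ≤ ρ(x, y, z) ≤ M`, so `φ ∘ ρ ≥ φ (l ^ (k + 1))` on
the `k`-th annulus, whose `μ ⊗ μ`-measure is `μ(B_{k+1})² - μ(B_k)² ≥ l ^ (2ηk)` by Ahlfors
regularity, because `l` is chosen with `a² l ^ (2η) ≥ 1 + A²`. On the radial side,
`φ t * t ^ (2η - 1) ≤ φ (l ^ k) * l ^ (2η(k + 1)) / t` on `[l ^ k, l ^ (k + 1))`, which
integrates to `φ (l ^ k) * l ^ (2η(k + 1)) * log l`. Comparing the two sums one scale apart costs the factor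
`l ^ (4η) * log l`.
-/

open MeasureTheory ENNReal

/-- The third order hypermetric induced by `d`:
`ρ(x,y,z) = inf_{u ∈ X} max {d(x,u), d(y,u), d(z,u)}`. -/
noncomputable def hyperRho {X : Type*} (d : X → X → ℝ) (x y z : X) : ℝ :=
  ⨅ u : X, max (d x u) (max (d y u) (d z u))

/-- `d` is a quasi-metric on `X` with triangular constant `κ`. -/
def IsQuasiMetric {X : Type*} (d : X → X → ℝ) (κ : ℝ) : Prop :=
  (∀ x y, 0 ≤ d x y) ∧ (∀ x y, (d x y = 0 ↔ x = y)) ∧ (∀ x y, d x y = d y x) ∧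
    (∀ x y z, d x z ≤ κ * (d x y + d y z))

/-- `(X,d,μ)` is `η`-Ahlfors regular with constants `a ≤ A`. -/
def IsAhlfors {X : Type*} [MeasurableSpace X] (d : X → X → ℝ) (μ : Measure X)
    (η a A : ℝ) : Prop :=
  ∀ x : X, ∀ r : ℝ, 0 < r →
    ENNReal.ofReal (a * r ^ η) ≤ μ {y | d x y < r} ∧
      μ {y | d x y < r} ≤ ENNReal.ofReal (A * r ^ η)

open Set Function

section Hypermetric

variable {X : Type*} {d : X → X → ℝ} {κ : ℝ}

theorem IsQuasiMetric.hyperRho_le_max_dist (hqm : IsQuasiMetric d κ) (x y z : X) :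
    hyperRho d x y z ≤ max (d x y) (d x z) := by
  obtain ⟨hd0, hdeq, hdsym, -⟩ := hqm
  calc hyperRho d x y z ≤ max (d x x) (max (d y x) (d z x)) :=
        ciInf_le ⟨0, by rintro _ ⟨u, rfl⟩; exact le_max_of_le_left (hd0 x u)⟩ x
    _ = max (d x y) (d x z) := by
        rw [(hdeq x x).2 rfl, hdsym y x, hdsym z x, max_eq_right (le_max_of_le_left (hd0 x y))]

theorem IsQuasiMetric.max_dist_le_hyperRho (hqm : IsQuasiMetric d κ) (hκ : 0 ≤ κ) (x y z : X) :
    max (d x y) (d x z) ≤ 2 * κ * hyperRho d x y z := by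
  obtain ⟨-, -, hdsym, hdtri⟩ := hqm
  have : Nonempty X := ⟨x⟩
  rw [hyperRho, Real.mul_iInf_of_nonneg (by positivity)]
  refine le_ciInf fun u => ?_
  set m := max (d x u) (max (d y u) (d z u))
  have hxu : d x u ≤ m := le_max_left _ _
  have hyu : d y u ≤ m := (le_max_left _ _).trans (le_max_right _ _)
  have hzu : d z u ≤ m := (le_max_right _ _).trans (le_max_right _ _)
  refine max_le ?_ ?_
  · calc d x y ≤ κ * (d x u + d y u) := hdsym u y ▸ hdtri x u y
      _ ≤ κ * (m + m) := by gcongr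
      _ = 2 * κ * m := by ring
  · calc d x z ≤ κ * (d x u + d z u) := hdsym u z ▸ hdtri x u z
      _ ≤ κ * (m + m) := by gcongr
      _ = 2 * κ * m := by ring

end Hypermetric

section Ahlfors

variable {X : Type*} [MeasurableSpace X] {d : X → X → ℝ} {μ : Measure X} {η a A : ℝ}

theorem IsAhlfors.sigmaFinite (hAhl : IsAhlfors d μ η a A) (x : X) : SigmaFinite μ :=
  Measure.FiniteSpanningSetsIn.sigmaFinite (C := univ)
    { set := fun n : ℕ => {y | d x y < n + 1}
      set_mem := fun _ => trivial
      finite := fun n => (hAhl x _ (by positivity)).2.trans_lt ofReal_lt_top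
      spanning := eq_univ_of_forall fun y => by
        obtain ⟨n, hn⟩ := exists_nat_gt (d x y)
        exact mem_iUnion.2 ⟨n, hn.trans (lt_add_one _)⟩ }

theorem IsAhlfors.ofReal_rpow_le_measure_sq_sub (hAhl : IsAhlfors d μ η a A) (ha : 0 ≤ a)
    (hA : 0 ≤ A) {l : ℝ} (hl : 0 < l) (hla : 1 + A ^ 2 ≤ a ^ 2 * l ^ (2 * η)) (x : X) {r : ℝ}
    (hr : 0 < r) :
    ENNReal.ofReal (r ^ (2 * η)) ≤ μ {y | d x y < r * l} ^ 2 - μ {y | d x y < r} ^ 2 := by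
  have sq_rpow : ∀ t : ℝ, 0 ≤ t → (t ^ η) ^ 2 = t ^ (2 * η) := fun t ht => by
    rw [← Real.rpow_mul_natCast ht, mul_comm]; norm_num
  have hupper : μ {y | d x y < r} ^ 2 ≤ ENNReal.ofReal (A ^ 2 * r ^ (2 * η)) := by
    rw [← sq_rpow r hr.le, ← mul_pow, ENNReal.ofReal_pow (by positivity)]
    gcongr
    exact (hAhl x r hr).2
  have hlower : ENNReal.ofReal (a ^ 2 * l ^ (2 * η) * r ^ (2 * η)) ≤ μ {y | d x y < r * l} ^ 2 := by
    rw [mul_assoc, ← Real.mul_rpow hl.le hr.le, mul_comm l, ← sq_rpow _ (by positivity), ← mul_pow,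
      ENNReal.ofReal_pow (by positivity)]
    gcongr
    exact (hAhl x _ (by positivity)).1
  refine ENNReal.le_sub_of_add_le_right (hupper.trans_lt ofReal_lt_top).ne ?_
  calc ENNReal.ofReal (r ^ (2 * η)) + μ {y | d x y < r} ^ 2
      ≤ ENNReal.ofReal (r ^ (2 * η)) + ENNReal.ofReal (A ^ 2 * r ^ (2 * η)) := by gcongr
    _ = ENNReal.ofReal ((1 + A ^ 2) * r ^ (2 * η)) := by
        rw [← ENNReal.ofReal_add (by positivity) (by positivity)]; ring_nf
    _ ≤ ENNReal.ofReal (a ^ 2 * l ^ (2 * η) * r ^ (2 * η)) := by gcongr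
    _ ≤ μ {y | d x y < r * l} ^ 2 := hlower

theorem measure_sq_sub_le_measure_prod_max_mem_Ico [SFinite μ] (x : X) (r s : ℝ) :
    μ {y | d x y < s} ^ 2 - μ {y | d x y < r} ^ 2 ≤
      μ.prod μ ((fun p : X × X => max (d x p.1) (d x p.2)) ⁻¹' Ico r s) := by
  have hannulus : (fun p : X × X => max (d x p.1) (d x p.2)) ⁻¹' Ico r s =
      {y | d x y < s} ×ˢ {y | d x y < s} \ {y | d x y < r} ×ˢ {y | d x y < r} := by
    ext p
    simp only [mem_preimage, mem_Ico, le_max_iff, max_lt_iff, mem_sdiff, mem_prod, mem_ofPred_eq,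
      not_and_or, not_lt]
    tauto
  rw [hannulus, sq, sq, ← Measure.prod_prod, ← Measure.prod_prod]
  exact le_measure_sdiff

end Ahlfors

section Radial

variable {φ : ℝ → ℝ}

theorem iUnion_Ico_zpow {l : ℝ} (hl : 1 < l) : ⋃ k : ℤ, Ico (l ^ k) (l ^ (k + 1)) = Ioi 0 := by
  ext t
  simp only [mem_iUnion, mem_Ioi]
  exact ⟨fun ⟨k, hk⟩ => (zpow_pos (by linarith) k).trans_le hk.1,
    fun ht => exists_mem_Ico_zpow ht hl⟩

theorem pairwise_disjoint_Ico_zpow₀ {l : ℝ} (hl : 1 ≤ l) :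
    Pairwise (Disjoint on fun k : ℤ => Ico (l ^ k) (l ^ (k + 1))) := by
  simpa only [Order.succ_eq_add_one] using (zpow_right_mono₀ hl).pairwise_disjoint_on_Ico_succ

theorem setLIntegral_Ico_le_mul_log (hφ_nonneg : ∀ t, 0 < t → 0 ≤ φ t)
    (hφ_mono : ∀ s t, 0 < s → s ≤ t → φ t ≤ φ s) {p r s : ℝ} (hp : 0 ≤ p) (hr : 0 < r)
    (hrs : r ≤ s) :
    ∫⁻ t in Ico r s, ENNReal.ofReal (φ t * t ^ (p - 1)) ≤
      ENNReal.ofReal (φ r * s ^ p * Real.log (s / r)) := by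
  have hφr := hφ_nonneg r hr
  calc ∫⁻ t in Ico r s, ENNReal.ofReal (φ t * t ^ (p - 1))
      ≤ ∫⁻ t in Ioc r s, ENNReal.ofReal (φ r * s ^ p * t⁻¹) := by
        rw [← setLIntegral_congr Ico_ae_eq_Ioc]
        refine setLIntegral_mono' measurableSet_Ico fun t ht => ENNReal.ofReal_le_ofReal ?_
        have ht0 : 0 < t := hr.trans_le ht.1
        rw [Real.rpow_sub_one ht0.ne', mul_div_assoc', div_eq_mul_inv]
        gcongr
        · exact hφ_mono r t hr ht.1
        · exact ht.2.le
    _ = ENNReal.ofReal (∫ t in r..s, φ r * s ^ p * t⁻¹) := by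
        rw [intervalIntegral.integral_of_le hrs, ofReal_integral_eq_lintegral_ofReal]
        · refine ((intervalIntegral.intervalIntegrable_inv (fun t ht => ?_)
            continuousOn_id).const_mul _).1
          rw [uIcc_of_le hrs] at ht
          exact (hr.trans_le ht.1).ne'
        · exact ae_restrict_of_forall_mem measurableSet_Ioc fun t ht =>
            mul_nonneg (mul_nonneg hφr (Real.rpow_nonneg (hr.le.trans hrs) p))
              (inv_nonneg.2 (hr.trans ht.1).le)
    _ = ENNReal.ofReal (φ r * s ^ p * Real.log (s / r)) := by
        rw [intervalIntegral.integral_const_mul, integral_inv_of_pos hr (hr.trans_le hrs)]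

theorem ofReal_mul_lintegral_Ioi_le_tsum (hφ_nonneg : ∀ t, 0 < t → 0 ≤ φ t)
    (hφ_mono : ∀ s t, 0 < s → s ≤ t → φ t ≤ φ s) {p l : ℝ} (hp : 0 ≤ p) (hl : 1 < l) :
    ENNReal.ofReal (1 / (l ^ (2 * p) * Real.log l)) *
        ∫⁻ t in Ioi 0, ENNReal.ofReal (φ t * t ^ (p - 1)) ≤
      ∑' k : ℤ, ENNReal.ofReal (φ (l ^ (k + 1)) * (l ^ k) ^ p) := by
  have hl0 : 0 < l := by linarith
  have hlog : 0 < Real.log l := Real.log_pos hl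
  rw [← iUnion_Ico_zpow hl,
    lintegral_iUnion (fun _ => measurableSet_Ico) (pairwise_disjoint_Ico_zpow₀ hl.le),
    ← ENNReal.tsum_mul_left, ← (Equiv.subRight (1 : ℤ)).tsum_eq
      (fun k => ENNReal.ofReal (φ (l ^ (k + 1)) * (l ^ k) ^ p))]
  refine ENNReal.tsum_le_tsum fun k => ?_
  have hpow : (l ^ (k + 1)) ^ p = l ^ (2 * p) * (l ^ (k - 1)) ^ p := by
    rw [show k + 1 = k - 1 + 2 by ring, zpow_add₀ hl0.ne', Real.mul_rpow (by positivity)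
      (by positivity), mul_comm, Real.rpow_mul hl0.le]
    norm_cast
  calc _ ≤ ENNReal.ofReal (1 / (l ^ (2 * p) * Real.log l)) *
        ENNReal.ofReal (φ (l ^ k) * (l ^ (k + 1)) ^ p * Real.log (l ^ (k + 1) / l ^ k)) := by
        gcongr
        exact setLIntegral_Ico_le_mul_log hφ_nonneg hφ_mono hp (zpow_pos hl0 k)
          (zpow_le_zpow_right₀ hl.le (by omega))
    _ = ENNReal.ofReal (φ (l ^ (k - 1 + 1)) * (l ^ (k - 1)) ^ p) := by
        rw [← ENNReal.ofReal_mul (one_div_nonneg.2 (by positivity)), zpow_add_one₀ hl0.ne',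
          mul_div_cancel_left₀ _ (zpow_pos hl0 k).ne', ← zpow_add_one₀ hl0.ne', hpow,
          sub_add_cancel]
        congr 1
        field_simp

end Radial

theorem tsum_le_lintegral_lintegral_hyperRho {X : Type*} [MeasurableSpace X] {d : X → X → ℝ}
    {κ : ℝ} (hκ : 0 ≤ κ) (hqm : IsQuasiMetric d κ) {μ : Measure X} {η a A : ℝ}
    (hAhl : IsAhlfors d μ η a A) (ha : 0 ≤ a) (hA : 0 ≤ A) {φ : ℝ → ℝ}
    (hφ_mono : ∀ s t, 0 < s → s ≤ t → φ t ≤ φ s) {l : ℝ} (hl : 1 < l)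
    (hla : 1 + A ^ 2 ≤ a ^ 2 * l ^ (2 * η)) (x : X) (hdx : Measurable (d x)) :
    ∑' k : ℤ, ENNReal.ofReal (φ (l ^ (k + 1)) * (l ^ k) ^ (2 * η)) ≤
      ∫⁻ y, ∫⁻ z, ENNReal.ofReal (φ (hyperRho d x y z)) ∂μ ∂μ := by
  have := hAhl.sigmaFinite x
  have hl0 : 0 < l := by linarith
  set M : X × X → ℝ := fun p => max (d x p.1) (d x p.2)
  set S : ℤ → Set (X × X) := fun k => M ⁻¹' Ico (l ^ k) (l ^ (k + 1))
  have hS : ∀ k, MeasurableSet (S k) := fun k =>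
    ((hdx.comp measurable_fst).max (hdx.comp measurable_snd)) measurableSet_Ico
  have hφS : ∀ k, ∀ p ∈ S k,
      ENNReal.ofReal (φ (l ^ (k + 1))) ≤ ENNReal.ofReal (φ (hyperRho d x p.1 p.2)) := by
    rintro k p ⟨hMlo, hMhi⟩
    have hρ_pos : 0 < hyperRho d x p.1 p.2 := by
      have := (zpow_pos hl0 k).trans_le (hMlo.trans (hqm.max_dist_le_hyperRho hκ x p.1 p.2))
      exact pos_of_mul_pos_right this (by positivity)
    exact ENNReal.ofReal_le_ofReal <| hφ_mono _ _ hρ_pos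
      ((hqm.hyperRho_le_max_dist x p.1 p.2).trans hMhi.le)
  calc ∑' k : ℤ, ENNReal.ofReal (φ (l ^ (k + 1)) * (l ^ k) ^ (2 * η))
      ≤ ∑' k : ℤ, ENNReal.ofReal (φ (l ^ (k + 1))) * μ.prod μ (S k) := by
        refine ENNReal.tsum_le_tsum fun k => ?_
        rw [ENNReal.ofReal_mul' (by positivity)]
        gcongr
        refine (hAhl.ofReal_rpow_le_measure_sq_sub ha hA hl0 hla x (zpow_pos hl0 k)).trans ?_
        rw [← zpow_add_one₀ hl0.ne']
        exact measure_sq_sub_le_measure_prod_max_mem_Ico x _ _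
    _ = ∑' k : ℤ, ∫⁻ p in S k, ENNReal.ofReal (φ (l ^ (k + 1))) ∂μ.prod μ := by
        simp only [setLIntegral_const]
    _ ≤ ∑' k : ℤ, ∫⁻ p in S k, ENNReal.ofReal (φ (hyperRho d x p.1 p.2)) ∂μ.prod μ :=
        ENNReal.tsum_le_tsum fun k => setLIntegral_mono' (hS k) (hφS k)
    _ = ∫⁻ p in ⋃ k, S k, ENNReal.ofReal (φ (hyperRho d x p.1 p.2)) ∂μ.prod μ :=
        (lintegral_iUnion hS ((pairwise_disjoint_Ico_zpow₀ hl.le).mono fun _ _ h => h.preimage M)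
          _).symm
    _ ≤ ∫⁻ p, ENNReal.ofReal (φ (hyperRho d x p.1 p.2)) ∂μ.prod μ := setLIntegral_le_lintegral _ _
    _ ≤ ∫⁻ y, ∫⁻ z, ENNReal.ofReal (φ (hyperRho d x y z)) ∂μ ∂μ := lintegral_prod_le _

theorem sq_mul_rpow_div_rpow_rpow {a P η : ℝ} (ha : 0 < a) (hP : 0 ≤ P) (hη : 0 < η) :
    a ^ 2 * (P ^ (1 / (2 * η)) / a ^ (1 / η)) ^ (2 * η) = P := by
  rw [Real.div_rpow (by positivity) (by positivity), ← Real.rpow_mul hP, ← Real.rpow_mul ha.le,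
    one_div_mul_cancel (by positivity), Real.rpow_one, show 1 / η * (2 * η) = (2 : ℕ) by
      field_simp; norm_num, Real.rpow_natCast]
  field_simp

/-- Lower bound: with `λ = (1 + A²(2κ)^{2η})^{1/(2η)} / a^{1/η}`, for every `x`,
`∬ φ(ρ(x,y,z)) dμ dμ ≥ (1/(λ^{4η} log λ)) ∫₀^∞ φ(t) t^{2η-1} dt`. -/
theorem statement11 {X : Type*} [MeasurableSpace X]
    (d : X → X → ℝ) (κ : ℝ) (hκ : 1 ≤ κ) (hqm : IsQuasiMetric d κ)
    (hd_meas : Measurable fun p : X × X => d p.1 p.2)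
    (μ : Measure X) (η : ℝ) (hη : 0 < η)
    (a A : ℝ) (ha : 0 < a) (haA : a ≤ A) (hAhl : IsAhlfors d μ η a A)
    (φ : ℝ → ℝ) (hφ_nonneg : ∀ t, 0 < t → 0 ≤ φ t)
    (hφ_mono : ∀ s t, 0 < s → s ≤ t → φ t ≤ φ s)
    (l : ℝ) (hl : l = (1 + A ^ 2 * (2 * κ) ^ (2 * η)) ^ (1 / (2 * η)) / a ^ (1 / η))
    (x : X) :
    ENNReal.ofReal (1 / (l ^ (4 * η) * Real.log l)) *
        ∫⁻ t in Set.Ioi (0 : ℝ), ENNReal.ofReal (φ t * t ^ (2 * η - 1)) ≤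
      ∫⁻ y, ∫⁻ z, ENNReal.ofReal (φ (hyperRho d x y z)) ∂μ ∂μ := by
  have hA : 0 ≤ A := ha.le.trans haA
  have hl0 : 0 < l := hl ▸ by positivity
  have hla : 1 + A ^ 2 ≤ a ^ 2 * l ^ (2 * η) := by
    rw [hl, sq_mul_rpow_div_rpow_rpow ha (by positivity) hη]
    have : 1 ≤ (2 * κ) ^ (2 * η) := Real.one_le_rpow (by linarith) (by positivity)
    nlinarith [sq_nonneg A]
  have hl1 : 1 < l := by
    by_contra! hl1
    have : l ^ (2 * η) ≤ 1 := Real.rpow_le_one hl0.le hl1 (by positivity)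
    nlinarith [mul_le_mul_of_nonneg_left this (sq_nonneg a), mul_self_le_mul_self ha.le haA]
  calc _ ≤ ∑' k : ℤ, ENNReal.ofReal (φ (l ^ (k + 1)) * (l ^ k) ^ (2 * η)) := by
        rw [show 4 * η = 2 * (2 * η) by ring]
        exact ofReal_mul_lintegral_Ioi_le_tsum hφ_nonneg hφ_mono (by positivity) hl1
    _ ≤ _ := tsum_le_lintegral_lintegral_hyperRho (by linarith) hqm hAhl ha.le hA hφ_mono hl1 hla
        x (hd_meas.comp measurable_prodMk_left)
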